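/- arXiv:1207.2384 — 4 statements merged into one kernel-verified Lean document; each statement's English description precedes it below -/
import Mathlib

section
/- Let q ≥ 4 be a real number. For every measurable function G : ℝ² → [0,∞], one has ∫_{t∈ℝ} ∫_{r∈(0,∞)} Ω(t,r)^q · G(T(t,r), R(t,r)) · r² dr dt ≤ 2^{q−4} ∫∫_{{(T,R) : 0 < R < π, cos T + cos R > 0}} G(T,R) · sin²R dR dT. -/
/-!
Write `a = 1/(1+(t+r)²)` and `b = 1/(1+(t-r)²)`. The Penrose map `(t,r) ↦ (T,R)` has Jacobian
matrix `[[a+b, a-b], [a-b, a+b]]`, whose determinant `4ab` is `Ω²`, and `sin R = Ω r`.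
Hence `Ω^q r² = Ω^(q-4) · Ω² (Ω r)² ≤ 2^(q-4) · Ω² sin² R` because `Ω ≤ 2`, and the
injective change of variables onto its image inside the diamond
`{0 < R < π, cos T + cos R > 0}` gives the inequality.
-/

open MeasureTheory Real Set ContinuousLinearMap
open scoped ENNReal

noncomputable section

lemma Real.sin_arctan_sub_arctan (x y : ℝ) :
    sin (arctan x - arctan y) = (x - y) / √((1 + x ^ 2) * (1 + y ^ 2)) := by
  have hx : 0 < √(1 + x ^ 2) := by positivity
  have hy : 0 < √(1 + y ^ 2) := by positivity
  rw [sin_sub, sin_arctan, cos_arctan, sin_arctan, cos_arctan, sqrt_mul (by positivity)]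
  field_simp

lemma Real.rpow_le_rpow_sub_mul_pow {x a q : ℝ} (n : ℕ) (hx : 0 < x) (hxa : x ≤ a)
    (hn : n ≤ q) :
    x ^ q ≤ a ^ (q - n) * x ^ n := by
  calc x ^ q = x ^ (q - n) * x ^ n := by rw [← rpow_natCast, ← rpow_add hx, sub_add_cancel]
    _ ≤ a ^ (q - n) * x ^ n := by gcongr

namespace Penrose

def conformalFactor (t r : ℝ) : ℝ := 2 / √((1 + (t + r) ^ 2) * (1 + (t - r) ^ 2))

notation "Ω" => Penrose.conformalFactor

def map (p : ℝ × ℝ) : ℝ × ℝ :=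
  (arctan (p.1 + p.2) + arctan (p.1 - p.2), arctan (p.1 + p.2) - arctan (p.1 - p.2))

def diamond : Set (ℝ × ℝ) := {p | 0 < p.2 ∧ p.2 < π ∧ 0 < cos p.1 + cos p.2}

def mapDeriv (p : ℝ × ℝ) : ℝ × ℝ →L[ℝ] ℝ × ℝ :=
  let a := 1 / (1 + (p.1 + p.2) ^ 2)
  let b := 1 / (1 + (p.1 - p.2) ^ 2)
  ((a + b) • fst ℝ ℝ ℝ + (a - b) • snd ℝ ℝ ℝ).prod
    ((a - b) • fst ℝ ℝ ℝ + (a + b) • snd ℝ ℝ ℝ)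

lemma conformalFactor_pos (t r : ℝ) : 0 < Ω t r := by
  unfold conformalFactor; positivity

lemma conformalFactor_le_two (t r : ℝ) : Ω t r ≤ 2 := by
  have h : 1 ≤ (1 + (t + r) ^ 2) * (1 + (t - r) ^ 2) := by
    nlinarith [sq_nonneg (t + r), sq_nonneg (t - r)]
  exact div_le_self zero_le_two (one_le_sqrt.mpr h)

lemma conformalFactor_sq (t r : ℝ) :
    Ω t r ^ 2 = 4 / ((1 + (t + r) ^ 2) * (1 + (t - r) ^ 2)) := by
  rw [conformalFactor, div_pow, sq_sqrt (by positivity)]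
  norm_num

lemma hasFDerivAt_map (p : ℝ × ℝ) : HasFDerivAt map (mapDeriv p) p := by
  have hA : HasFDerivAt (fun p : ℝ × ℝ => arctan (p.1 + p.2))
      ((1 / (1 + (p.1 + p.2) ^ 2)) • (fst ℝ ℝ ℝ + snd ℝ ℝ ℝ)) p :=
    (hasDerivAt_arctan _).comp_hasFDerivAt p (hasFDerivAt_fst.add hasFDerivAt_snd)
  have hB : HasFDerivAt (fun p : ℝ × ℝ => arctan (p.1 - p.2))
      ((1 / (1 + (p.1 - p.2) ^ 2)) • (fst ℝ ℝ ℝ - snd ℝ ℝ ℝ)) p :=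
    (hasDerivAt_arctan _).comp_hasFDerivAt p (hasFDerivAt_fst.sub hasFDerivAt_snd)
  refine ((hA.add hB).prodMk (hA.sub hB)).congr_fderiv (ContinuousLinearMap.ext fun v => ?_)
  simp only [one_div, smul_add, prod_apply, add_apply, smul_apply, coe_fst', smul_eq_mul,
    coe_snd', sub_apply, mapDeriv, Prod.ext_iff]
  constructor <;> ring

lemma det_mapDeriv (p : ℝ × ℝ) : (mapDeriv p).det = Ω p.1 p.2 ^ 2 := by
  set a := 1 / (1 + (p.1 + p.2) ^ 2)
  set b := 1 / (1 + (p.1 - p.2) ^ 2)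
  have hmat : mapDeriv p = LinearMap.toContinuousLinearMap (Matrix.toLin
      (Module.Basis.finTwoProd ℝ) (Module.Basis.finTwoProd ℝ) !![a + b, a - b; a - b, a + b]) :=
    (Matrix.toLin_finTwoProd_toContinuousLinearMap _ _ _ _).symm
  rw [hmat, ContinuousLinearMap.det, LinearMap.coe_toContinuousLinearMap, LinearMap.det_toLin,
    Matrix.det_fin_two_of, conformalFactor_sq]
  simp only [a, b]
  field_simp
  ring

lemma map_injective : Function.Injective map := by
  rintro ⟨t, r⟩ ⟨t', r'⟩ h
  simp only [map, Prod.mk.injEq] at h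
  have hplus := arctan_injective (show arctan (t + r) = arctan (t' + r') by linarith)
  have hminus := arctan_injective (show arctan (t - r) = arctan (t' - r') by linarith)
  exact Prod.ext (by linarith) (by linarith)

lemma sin_map_snd (t r : ℝ) : sin (map (t, r)).2 = Ω t r * r := by
  rw [map, sin_arctan_sub_arctan, conformalFactor]
  ring

lemma mapsTo_map : MapsTo map (univ ×ˢ Ioi 0) diamond := by
  rintro ⟨t, r⟩ ⟨-, hr : 0 < r⟩
  have hlt : arctan (t - r) < arctan (t + r) := arctan_strictMono (by linarith)
  refine ⟨sub_pos.mpr hlt, ?_, ?_⟩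
  · simp only [map]
    linarith [arctan_lt_pi_div_two (t + r), neg_pi_div_two_lt_arctan (t - r)]
  · simp only [map]
    rw [cos_add_cos,
      show (arctan (t + r) + arctan (t - r) + (arctan (t + r) - arctan (t - r))) / 2
        = arctan (t + r) by ring,
      show (arctan (t + r) + arctan (t - r) - (arctan (t + r) - arctan (t - r))) / 2
        = arctan (t - r) by ring]
    exact mul_pos (mul_pos two_pos (cos_arctan_pos _)) (cos_arctan_pos _)

lemma lintegral_conformalFactor_sq_mul_comp_map_le {g : ℝ × ℝ → ℝ≥0∞}
    (hg : Measurable g) :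
    ∫⁻ t, ∫⁻ r in Ioi 0, ENNReal.ofReal (Ω t r ^ 2) * g (map (t, r))
      ≤ ∫⁻ p in diamond, g p := by
  have hmap : Continuous map := by unfold map; fun_prop
  have hmeas : Measurable fun p : ℝ × ℝ => ENNReal.ofReal (Ω p.1 p.2 ^ 2) * g (map p) := by
    refine Measurable.mul ?_ (hg.comp hmap.measurable)
    unfold conformalFactor; fun_prop
  have hprod : (volume : Measure (ℝ × ℝ)).restrict (univ ×ˢ Ioi 0) =
      volume.prod (volume.restrict (Ioi 0)) := by
    rw [Measure.volume_eq_prod, ← Measure.prod_restrict, Measure.restrict_univ]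
  calc ∫⁻ t, ∫⁻ r in Ioi 0, ENNReal.ofReal (Ω t r ^ 2) * g (map (t, r))
      = ∫⁻ p in univ ×ˢ Ioi 0, ENNReal.ofReal |(mapDeriv p).det| * g (map p) := by
        rw [hprod, lintegral_prod _ (by simpa only [det_mapDeriv, abs_sq] using hmeas.aemeasurable)]
        simp only [det_mapDeriv, abs_sq]
    _ = ∫⁻ p in map '' (univ ×ˢ Ioi 0), g p :=
        (lintegral_image_eq_lintegral_abs_det_fderiv_mul volume
          (MeasurableSet.univ.prod measurableSet_Ioi)
          (fun p _ => (hasFDerivAt_map p).hasFDerivWithinAt) map_injective.injOn g).symm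
    _ ≤ ∫⁻ p in diamond, g p := lintegral_mono_set mapsTo_map.image_subset

lemma conformalFactor_rpow_mul_sq_le {q : ℝ} (hq : 4 ≤ q) (t r : ℝ) :
    Ω t r ^ q * r ^ 2 ≤ 2 ^ (q - 4) * (Ω t r ^ 2 * sin (map (t, r)).2 ^ 2) := by
  calc Ω t r ^ q * r ^ 2 ≤ 2 ^ (q - 4) * Ω t r ^ 4 * r ^ 2 := by
        gcongr
        exact_mod_cast rpow_le_rpow_sub_mul_pow 4 (conformalFactor_pos t r)
          (conformalFactor_le_two t r) (by simpa)
    _ = 2 ^ (q - 4) * (Ω t r ^ 2 * sin (map (t, r)).2 ^ 2) := by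
        rw [sin_map_snd]; ring

end Penrose

open Penrose in
/-- For `q ≥ 4` and every measurable `G : ℝ² → [0,∞]`,
`∫_{t∈ℝ} ∫_{r∈(0,∞)} Ω(t,r)^q G(T(t,r), R(t,r)) r² dr dt
  ≤ 2^{q−4} ∫∫_{{(T,R) : 0 < R < π, cos T + cos R > 0}} G(T,R) sin²R dR dT`. -/
theorem penrose_Lq_change_of_variables (q : ℝ) (hq : 4 ≤ q)
    (G : ℝ × ℝ → ℝ≥0∞) (hG : Measurable G) :
    ∫⁻ t : ℝ, ∫⁻ r in Set.Ioi (0 : ℝ),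
        ENNReal.ofReal ((2 / Real.sqrt ((1 + (t + r) ^ 2) * (1 + (t - r) ^ 2))) ^ q * r ^ 2) *
          G (Real.arctan (t + r) + Real.arctan (t - r),
             Real.arctan (t + r) - Real.arctan (t - r))
      ≤ ENNReal.ofReal ((2 : ℝ) ^ (q - 4)) *
          ∫⁻ p in {p : ℝ × ℝ | 0 < p.2 ∧ p.2 < Real.pi ∧ 0 < Real.cos p.1 + Real.cos p.2},
            G p * ENNReal.ofReal (Real.sin p.2 ^ 2) := by
  set c := ENNReal.ofReal ((2 : ℝ) ^ (q - 4))
  set g : ℝ × ℝ → ℝ≥0∞ := fun p => G p * ENNReal.ofReal (sin p.2 ^ 2)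
  have hg : Measurable g := hG.mul (by fun_prop)
  calc _ ≤ ∫⁻ t, ∫⁻ r in Ioi 0, c * (ENNReal.ofReal (Ω t r ^ 2) * g (map (t, r))) := by
        refine lintegral_mono fun t => lintegral_mono fun r => ?_
        calc ENNReal.ofReal (Ω t r ^ q * r ^ 2) * G (map (t, r))
            ≤ ENNReal.ofReal (2 ^ (q - 4) * (Ω t r ^ 2 * sin (map (t, r)).2 ^ 2))
                * G (map (t, r)) := by
              gcongr ENNReal.ofReal ?_ * _
              exact conformalFactor_rpow_mul_sq_le hq t r
          _ = _ := by
            simp only [g, c, ENNReal.ofReal_mul (by positivity : (0 : ℝ) ≤ 2 ^ (q - 4)),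
              ENNReal.ofReal_mul (by positivity : (0 : ℝ) ≤ Ω t r ^ 2)]
            ring
    _ = c * ∫⁻ t, ∫⁻ r in Ioi 0, ENNReal.ofReal (Ω t r ^ 2) * g (map (t, r)) := by
        simp_rw [lintegral_const_mul' c _ ENNReal.ofReal_ne_top]
    _ ≤ c * ∫⁻ p in diamond, g p := by
        gcongr; exact lintegral_conformalFactor_sq_mul_comp_map_le hg
end
end

section
/- Let w : (0,∞) → ℝ be twice continuously differentiable, and define v : (0,π) → ℝ by v(R) = w(tan(R/2)) / (1 + cos R), so that v(2·arctan r) = ((1+r²)/2)·w(r). Then for every r > 0, writing R = 2·arctan r, one has (2/(1+r²)) · (1/sin²R) · d/dR ( sin²R · v′(R) ) = ((1+r²)/2)² · ( w″(r) + (2/r)·w′(r) ) + ((1+r²)/2) · r · w′(r) + ((3+r²)/2) · w(r). -/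
/-!
Put `t = tan (R / 2)`, so that `r = t` at `R = 2 arctan r`. Then `dt/dR = (1 + t²)/2`,
`sin R = 2t/(1 + t²)` and `v = w(t) (1 + t²)/2`, so every quantity on the left becomes an explicit
function of `t`: in particular `sin²R · v′(R) = t² w′(t) + 2t³ w(t)/(1 + t²)`. One more
application of the chain rule and clearing denominators gives the right-hand side.
-/

open Real Set

lemma hasDerivAt_tan_half {S : ℝ} (hS : cos (S / 2) ≠ 0) :
    HasDerivAt (fun S : ℝ => tan (S / 2)) ((1 + tan (S / 2) ^ 2) / 2) S := by
  refine ((hasDerivAt_tan hS).comp S ((hasDerivAt_id S).div_const 2)).congr_deriv ?_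
  rw [← inv_one_add_tan_sq hS]
  field_simp

lemma hasDerivAt_comp_tan_half {f : ℝ → ℝ} {f' S t : ℝ} (hS : cos (S / 2) ≠ 0)
    (ht : tan (S / 2) = t) (hf : HasDerivAt f f' t) :
    HasDerivAt (fun S : ℝ => f (tan (S / 2))) (f' * ((1 + t ^ 2) / 2)) S := by
  subst ht
  exact hf.comp S (hasDerivAt_tan_half hS)

lemma one_add_cos_eq_two_div_one_add_tan_half_sq {S : ℝ} (hS : cos S ≠ -1) :
    1 + cos S = 2 / (1 + tan (S / 2) ^ 2) := by
  rw [cos_eq_two_mul_tan_half_div_one_sub_tan_half_sq S hS]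
  field_simp
  ring

lemma cos_half_pos_of_mem_Ioo {S : ℝ} (hS : S ∈ Ioo 0 π) : 0 < cos (S / 2) :=
  cos_pos_of_mem_Ioo ⟨by linarith [hS.1, pi_pos], by linarith [hS.2]⟩

lemma tan_half_pos_of_mem_Ioo {S : ℝ} (hS : S ∈ Ioo 0 π) : 0 < tan (S / 2) :=
  tan_pos_of_pos_of_lt_pi_div_two (by linarith [hS.1]) (by linarith [hS.2])

lemma cos_ne_neg_one_of_mem_Ioo {S : ℝ} (hS : S ∈ Ioo 0 π) : cos S ≠ -1 := by
  have h := cos_half_pos_of_mem_Ioo hS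
  have hcos : cos S = 2 * cos (S / 2) ^ 2 - 1 := by rw [← cos_two_mul]; ring_nf
  nlinarith

section Pullback

variable {w w' v : ℝ → ℝ}

lemma eq_mul_of_div_one_add_cos (hv : ∀ R : ℝ, v R = w (tan (R / 2)) / (1 + cos R))
    {S : ℝ} (hS : S ∈ Ioo 0 π) :
    v S = w (tan (S / 2)) * ((1 + tan (S / 2) ^ 2) / 2) := by
  rw [hv, one_add_cos_eq_two_div_one_add_tan_half_sq (cos_ne_neg_one_of_mem_Ioo hS)]
  field_simp

lemma hasDerivAt_of_div_one_add_cos (hw : ∀ r : ℝ, 0 < r → HasDerivAt w (w' r) r)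
    (hv : ∀ R : ℝ, v R = w (tan (R / 2)) / (1 + cos R)) {S : ℝ} (hS : S ∈ Ioo 0 π) :
    HasDerivAt v ((w' (tan (S / 2)) * ((1 + tan (S / 2) ^ 2) / 2)
      + w (tan (S / 2)) * tan (S / 2)) * ((1 + tan (S / 2) ^ 2) / 2)) S := by
  set t := tan (S / 2)
  have hf : HasDerivAt (fun t => w t * ((1 + t ^ 2) / 2))
      (w' t * ((1 + t ^ 2) / 2) + w t * t) t := by
    refine (hw t (tan_half_pos_of_mem_Ioo hS)).mul (((hasDerivAt_pow 2 t).const_add 1).div_const 2)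
      |>.congr_deriv ?_
    ring
  refine (hasDerivAt_comp_tan_half (cos_half_pos_of_mem_Ioo hS).ne' rfl hf).congr_of_eventuallyEq ?_
  filter_upwards [isOpen_Ioo.mem_nhds hS] with R hR
  exact eq_mul_of_div_one_add_cos hv hR

lemma sin_sq_mul_deriv_eq (hw : ∀ r : ℝ, 0 < r → HasDerivAt w (w' r) r)
    (hv : ∀ R : ℝ, v R = w (tan (R / 2)) / (1 + cos R)) {S : ℝ} (hS : S ∈ Ioo 0 π) :
    sin S ^ 2 * deriv v S
      = tan (S / 2) ^ 2 * w' (tan (S / 2))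
        + 2 * tan (S / 2) ^ 3 * w (tan (S / 2)) / (1 + tan (S / 2) ^ 2) := by
  rw [(hasDerivAt_of_div_one_add_cos hw hv hS).deriv,
    sin_eq_two_mul_tan_half_div_one_add_tan_half_sq]
  field_simp

end Pullback

lemma hasDerivAt_sq_mul_add_cube_mul_div {w w' w'' : ℝ → ℝ} {r : ℝ}
    (hw : HasDerivAt w (w' r) r) (hw' : HasDerivAt w' (w'' r) r) :
    HasDerivAt (fun t => t ^ 2 * w' t + 2 * t ^ 3 * w t / (1 + t ^ 2))
      (2 * r * w' r + r ^ 2 * w'' r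
        + ((6 * r ^ 2 * w r + 2 * r ^ 3 * w' r) * (1 + r ^ 2) - 2 * r ^ 3 * w r * (2 * r))
          / (1 + r ^ 2) ^ 2) r := by
  have hden : HasDerivAt (fun t : ℝ => 1 + t ^ 2) (2 * r) r := by
    simpa using (hasDerivAt_pow 2 r).const_add 1
  have hnum : HasDerivAt (fun t => 2 * t ^ 3 * w t) (6 * r ^ 2 * w r + 2 * r ^ 3 * w' r) r := by
    refine ((hasDerivAt_pow 3 r).const_mul 2).mul hw |>.congr_deriv ?_
    ring
  refine ((hasDerivAt_pow 2 r).mul hw').add (hnum.div hden (by positivity)) |>.congr_deriv ?_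
  ring

/-- The operator `H₀` of the Penrose transform on radial functions:
let `w` be twice differentiable on `(0,∞)` with derivatives `w'`, `w''`, and define
`v(R) = w(tan(R/2))/(1 + cos R)` (so that `v(2 arctan r) = ((1+r²)/2) w(r)`).
Then for `r > 0`, writing `R = 2 arctan r`,
`(2/(1+r²)) (1/sin²R) d/dR (sin²R v′(R))
  = ((1+r²)/2)² (w″(r) + (2/r) w′(r)) + ((1+r²)/2) r w′(r) + ((3+r²)/2) w(r)`. -/
theorem penrose_H0_radial (w w' w'' : ℝ → ℝ)
    (hw : ∀ r : ℝ, 0 < r → HasDerivAt w (w' r) r)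
    (hw' : ∀ r : ℝ, 0 < r → HasDerivAt w' (w'' r) r)
    (v : ℝ → ℝ)
    (hv : ∀ R : ℝ, v R = w (Real.tan (R / 2)) / (1 + Real.cos R))
    (r : ℝ) (hr : 0 < r) :
    (2 / (1 + r ^ 2)) *
        ((1 / Real.sin (2 * Real.arctan r) ^ 2) *
          deriv (fun S : ℝ => Real.sin S ^ 2 * deriv v S) (2 * Real.arctan r))
      = ((1 + r ^ 2) / 2) ^ 2 * (w'' r + (2 / r) * w' r)
          + ((1 + r ^ 2) / 2) * r * w' r + ((3 + r ^ 2) / 2) * w r := by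
  have hR : 2 * arctan r ∈ Ioo 0 π :=
    ⟨by linarith [arctan_pos.2 hr], by linarith [arctan_lt_pi_div_two r]⟩
  have htan : tan (2 * arctan r / 2) = r := by
    rw [mul_div_cancel_left₀ _ two_ne_zero, tan_arctan]
  have hsin : sin (2 * arctan r) = 2 * r / (1 + r ^ 2) := by
    rw [sin_eq_two_mul_tan_half_div_one_add_tan_half_sq, htan]
  have hF := hasDerivAt_comp_tan_half (cos_half_pos_of_mem_Ioo hR).ne' htan
    (hasDerivAt_sq_mul_add_cube_mul_div (hw r hr) (hw' r hr))
  have hderiv := hF.congr_of_eventuallyEq <| by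
    filter_upwards [isOpen_Ioo.mem_nhds hR] with S hS
    exact sin_sq_mul_deriv_eq hw hv hS
  rw [hderiv.deriv, hsin]
  field_simp
  ring
end

section
/- For every real number s > 3, there exists a constant C > 0 such that for every t ∈ ℝ, ∫₀^∞ Ω(t,r)^s · r² dr ≤ C, where Ω(t,r) = 2/√((1+(t+r)²)(1+(t−r)²)). -/
/-!
Since `(1 + (t + r)²)(1 + (t - r)²) ≥ 1 + (t + r)² + (t - r)² ≥ 1 + r²`, the conformal factor obeys
`Ω(t, r) ≤ 2 (1 + r²)^(-1/2)` uniformly in `t`. Hence `Ω(t, r)^s r² ≤ 2^s (1 + r²)^(-(s - 2)/2)`,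
and this majorant is integrable on `ℝ` because `s - 2 > 1 = dim ℝ`.
-/

open MeasureTheory Real Set
open scoped ENNReal

noncomputable def penroseConformalFactor (t r : ℝ) : ℝ :=
  2 / √((1 + (t + r) ^ 2) * (1 + (t - r) ^ 2))

lemma one_add_sq_le_one_add_sq_mul_one_add_sq (t r : ℝ) :
    1 + r ^ 2 ≤ (1 + (t + r) ^ 2) * (1 + (t - r) ^ 2) := by
  nlinarith [sq_nonneg t, sq_nonneg ((t + r) * (t - r))]

lemma penroseConformalFactor_nonneg (t r : ℝ) : 0 ≤ penroseConformalFactor t r := by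
  unfold penroseConformalFactor
  positivity

lemma penroseConformalFactor_le (t r : ℝ) : penroseConformalFactor t r ≤ 2 / √(1 + r ^ 2) := by
  unfold penroseConformalFactor
  gcongr
  exact one_add_sq_le_one_add_sq_mul_one_add_sq t r

lemma penroseConformalFactor_rpow_mul_sq_le {s : ℝ} (hs : 0 ≤ s) (t r : ℝ) :
    penroseConformalFactor t r ^ s * r ^ 2 ≤ 2 ^ s * (1 + r ^ 2) ^ (-(s - 2) / 2) := by
  have hpos : 0 < 1 + r ^ 2 := by positivity
  calc penroseConformalFactor t r ^ s * r ^ 2 ≤ (2 / √(1 + r ^ 2)) ^ s * (1 + r ^ 2) := by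
        have := penroseConformalFactor_nonneg t r
        gcongr
        · exact penroseConformalFactor_le t r
        · linarith
    _ = 2 ^ s * (1 + r ^ 2) ^ (-(s - 2) / 2) := by
        rw [show -(s - 2) / 2 = 1 - s / 2 by ring, rpow_sub hpos, rpow_one,
          div_rpow zero_le_two (sqrt_nonneg _), sqrt_eq_rpow, ← rpow_mul hpos.le,
          one_div_mul_eq_div]
        ring

lemma integrable_rpow_neg_one_add_sq {a : ℝ} (ha : 1 < a) :
    Integrable fun r : ℝ => (1 + r ^ 2) ^ (-a / 2) := by
  simpa only [norm_eq_abs, sq_abs] using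
    integrable_rpow_neg_one_add_norm_sq (μ := volume) (E := ℝ) (by simpa using ha)

/-- For every `s > 3` there is `C > 0` such that for all `t : ℝ`,
`∫₀^∞ Ω(t,r)^s r² dr ≤ C`, where `Ω(t,r) = 2/√((1+(t+r)²)(1+(t−r)²))`. -/
theorem omega_integral_uniform_bound (s : ℝ) (hs : 3 < s) :
    ∃ C : ℝ, 0 < C ∧ ∀ t : ℝ,
      ∫⁻ r in Set.Ioi (0 : ℝ),
          ENNReal.ofReal
            ((2 / Real.sqrt ((1 + (t + r) ^ 2) * (1 + (t - r) ^ 2))) ^ s * r ^ 2)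
        ≤ ENNReal.ofReal C := by
  set I := ∫⁻ r : ℝ, ENNReal.ofReal (2 ^ s * (1 + r ^ 2) ^ (-(s - 2) / 2))
  have hI : I ≠ ∞ :=
    (((integrable_rpow_neg_one_add_sq (by linarith)).const_mul _).lintegral_lt_top).ne
  refine ⟨I.toReal + 1, by positivity, fun t => ?_⟩
  calc _ ≤ ∫⁻ r in Ioi 0, ENNReal.ofReal (2 ^ s * (1 + r ^ 2) ^ (-(s - 2) / 2)) :=
        setLIntegral_mono' measurableSet_Ioi fun r _ =>
          ENNReal.ofReal_le_ofReal (penroseConformalFactor_rpow_mul_sq_le (by linarith) t r)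
    _ ≤ I := setLIntegral_le_lintegral _ _
    _ ≤ ENNReal.ofReal (I.toReal + 1) := by
        rw [ENNReal.ofReal_add ENNReal.toReal_nonneg zero_le_one, ENNReal.ofReal_toReal hI]
        exact le_self_add
end

section
/- Let N ≥ 2 be an integer and let μ be the uniform probability measure on the unit sphere S^{N−1} ⊂ ℝ^N. Then for every t ≥ 0, μ( { x ∈ S^{N−1} : |x₁| > t } ) ≤ 2·exp( −(N−1)·t²/2 ), where x₁ denotes the first coordinate of x. -/
/-!
The coordinate `x₁` of a uniform point of the sphere has the law of `g₁ / ‖g‖` for a standard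
Gaussian vector `g`: apply Fubini to `(x, g) ↦ ⟪g, x⟫ / ‖g‖` under `μ ⊗ stdGaussian`, and use the
rotation invariance of each factor to see that every slice has the same measure.

Write `g = (a, z)` with `a` standard Gaussian and `z ∈ ℝ^(N-1)` independent of it. For `t < 1` the
event `t ‖g‖ < |a|` is `κ ‖z‖² < a²` with `κ = t² / (1 - t²)`, so the Chernoff bound
`P(a² > s) ≤ 2 exp(-s/2)` leaves
`2 E exp(-κ ‖z‖² / 2) = 2 (1 + κ)^(-(N-1)/2) = 2 (1 - t²)^((N-1)/2) ≤ 2 exp(-(N-1) t² / 2)`.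
-/

open MeasureTheory ProbabilityTheory Real Set
open scoped ENNReal RealInnerProductSpace

section Invariance

variable {E β : Type*} [NormedAddCommGroup E] [InnerProductSpace ℝ E] [MeasurableSpace E]
  [BorelSpace E] [MeasurableSpace β]

lemma map_eq_map_of_norm_eq {μ : Measure E} (hμ : ∀ A : E ≃ₗᵢ[ℝ] E, μ.map A = μ)
    {f : E → E → β} (hf : ∀ (A : E ≃ₗᵢ[ℝ] E) u x, f (A u) (A x) = f u x)
    (hfm : ∀ u, Measurable (f u)) {u v : E} (huv : ‖u‖ = ‖v‖) :
    μ.map (f u) = μ.map (f v) := by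
  set A : E ≃ₗᵢ[ℝ] E := (ℝ ∙ (u - v))ᗮ.reflection
  have hA : A u = v := Submodule.reflection_sub huv
  calc μ.map (f u) = μ.map (f v ∘ A) := by
        congr 1; funext x; simp only [Function.comp_apply, ← hA, hf]
    _ = μ.map (f v) := by
        rw [← Measure.map_map (hfm v) A.continuous.measurable, hμ]

theorem map_inner_eq_map_inner_div_norm [SecondCountableTopology E] {μ ν : Measure E}
    [IsProbabilityMeasure μ] [IsProbabilityMeasure ν]
    (hμ : ∀ A : E ≃ₗᵢ[ℝ] E, μ.map A = μ) (hμ1 : ∀ᵐ x ∂μ, ‖x‖ = 1)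
    (hν : ∀ A : E ≃ₗᵢ[ℝ] E, ν.map A = ν) (hν0 : ∀ᵐ g ∂ν, g ≠ 0) {e : E} (he : ‖e‖ = 1) :
    μ.map (fun x => ⟪e, x⟫) = ν.map (fun g => ⟪e, g⟫ / ‖g‖) := by
  ext s hs
  set F : E × E → ℝ := fun p => ⟪p.2, p.1⟫ / ‖p.2‖
  have hT : MeasurableSet (F ⁻¹' s) := (by fun_prop : Measurable F) hs
  have hx : ∀ x : E, ‖x‖ = 1 → ν (Prod.mk x ⁻¹' (F ⁻¹' s)) = ν.map (fun g => ⟪e, g⟫ / ‖g‖) s := by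
    intro x hx
    have hmap := map_eq_map_of_norm_eq hν (f := fun u g => ⟪u, g⟫ / ‖g‖)
      (fun A u g => by simp only [LinearIsometryEquiv.inner_map_map, LinearIsometryEquiv.norm_map])
      (fun u => by fun_prop) (hx.trans he.symm)
    rw [← hmap, Measure.map_apply (by fun_prop) hs]
    congr 1
    ext g
    simp only [F, mem_preimage, real_inner_comm g]
  have hg : ∀ g : E, g ≠ 0 → μ ((·, g) ⁻¹' (F ⁻¹' s)) = μ.map (fun x => ⟪e, x⟫) s := by
    intro g hg
    have hmap := map_eq_map_of_norm_eq hμ (f := fun u x => ⟪u, x⟫)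
      (fun A u x => LinearIsometryEquiv.inner_map_map A u x) (fun u => by fun_prop)
      (u := ‖g‖⁻¹ • g) (v := e) ((norm_smul_inv_norm hg).trans he.symm)
    rw [← hmap, Measure.map_apply (by fun_prop) hs]
    congr 1
    ext x
    simp only [F, mem_preimage, real_inner_smul_left, div_eq_inv_mul]
  calc μ.map (fun x => ⟪e, x⟫) s = (μ.prod ν) (F ⁻¹' s) := by
        rw [Measure.prod_apply_symm hT, lintegral_congr_ae (hν0.mono hg), lintegral_const,
          measure_univ, mul_one]
    _ = ν.map (fun g => ⟪e, g⟫ / ‖g‖) s := by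
        rw [Measure.prod_apply hT, lintegral_congr_ae (hμ1.mono hx), lintegral_const,
          measure_univ, mul_one]

end Invariance

instance nullSingletonClass_stdGaussian_euclideanSpace {ι : Type*} [Fintype ι] [Nonempty ι] :
    NullSingletonClass (stdGaussian (EuclideanSpace ℝ ι)) := by
  have := nullSingletonClass_gaussianReal (μ := 0) one_ne_zero
  refine ⟨fun g => ?_⟩
  rw [← map_pi_eq_stdGaussian, Measure.map_apply (by fun_prop) (measurableSet_singleton g)]
  have hpre : WithLp.toLp 2 ⁻¹' {g} = {g.ofLp} := by ext; simp [WithLp.ext_iff]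
  rw [hpre, measure_singleton]

lemma gaussianReal_real_Ici_le {r : ℝ} (hr : 0 ≤ r) :
    (gaussianReal 0 1).real (Ici r) ≤ exp (-r ^ 2 / 2) := by
  calc _ ≤ exp (-r * r) * mgf id (gaussianReal 0 1) r :=
        measure_ge_le_exp_mul_mgf r hr (integrable_exp_mul_gaussianReal r)
    _ = exp (-r ^ 2 / 2) := by
      rw [mgf_id_gaussianReal, ← exp_add]; push_cast; ring_nf

lemma gaussianReal_lt_sq_le {s : ℝ} (hs : 0 ≤ s) :
    gaussianReal 0 1 {a | s < a ^ 2} ≤ ENNReal.ofReal (2 * exp (-s / 2)) := by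
  have hsplit : {a : ℝ | s < a ^ 2} ⊆ Ici √s ∪ Neg.neg ⁻¹' Ici √s := by
    intro a ha
    have h : √s ≤ |a| := by simpa [Real.sqrt_sq_eq_abs] using Real.sqrt_le_sqrt ha.le
    rcases le_abs'.1 h with h | h
    · exact Or.inr (show √s ≤ -a by linarith)
    · exact Or.inl h
  have hneg : gaussianReal 0 1 (Neg.neg ⁻¹' Ici √s) = gaussianReal 0 1 (Ici √s) := by
    rw [← Measure.map_apply measurable_neg measurableSet_Ici, gaussianReal_map_neg, neg_zero]
  calc gaussianReal 0 1 {a | s < a ^ 2}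
      ≤ gaussianReal 0 1 (Ici √s) + gaussianReal 0 1 (Ici √s) := by
        grw [measure_mono hsplit, measure_union_le, hneg]
    _ = ENNReal.ofReal (2 * (gaussianReal 0 1).real (Ici √s)) := by
        rw [ENNReal.ofReal_mul zero_le_two, ofReal_measureReal]; simp [two_mul]
    _ ≤ ENNReal.ofReal (2 * exp (-s / 2)) := by
        grw [gaussianReal_real_Ici_le (Real.sqrt_nonneg s), Real.sq_sqrt hs]
lemma integral_exp_neg_mul_sq_gaussianReal (b : ℝ) :
    ∫ x, exp (-b * x ^ 2) ∂gaussianReal 0 1 = (√(1 + 2 * b))⁻¹ := by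
  have hexp : ∀ x : ℝ, gaussianPDFReal 0 1 x • exp (-b * x ^ 2)
      = (√(2 * π))⁻¹ * exp (-(b + 1 / 2) * x ^ 2) := by
    intro x
    rw [gaussianPDFReal, smul_eq_mul, mul_assoc, ← exp_add]
    congr 2
    · simp
    · push_cast; ring
  rw [integral_gaussianReal_eq_integral_smul one_ne_zero]
  simp_rw [hexp]
  rw [integral_const_mul, integral_gaussian, ← Real.sqrt_inv, ← Real.sqrt_mul (by positivity),
    ← Real.sqrt_inv]
  congr 1
  field_simp
  ring

lemma integrable_exp_neg_mul_sq_gaussianReal {b : ℝ} (hb : 0 ≤ b) :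
    Integrable (fun x => exp (-b * x ^ 2)) (gaussianReal 0 1) :=
  Integrable.of_bound (by fun_prop) 1 (ae_of_all _ fun x => by
    rw [Real.norm_of_nonneg (exp_pos _).le, exp_le_one_iff]
    nlinarith [sq_nonneg x])

lemma lintegral_exp_neg_mul_sum_sq_pi_gaussianReal {ι : Type*} [Fintype ι] {b : ℝ} (hb : 0 ≤ b) :
    ∫⁻ z, ENNReal.ofReal (exp (-b * ∑ j, z j ^ 2)) ∂Measure.pi (fun _ : ι => gaussianReal 0 1)
      = ENNReal.ofReal ((√(1 + 2 * b))⁻¹ ^ Fintype.card ι) := by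
  simp_rw [Finset.mul_sum, exp_sum]
  rw [← ofReal_integral_eq_lintegral_ofReal
      (Integrable.fintype_prod fun _ => integrable_exp_neg_mul_sq_gaussianReal hb)
      (ae_of_all _ fun _ => by positivity),
    integral_fintype_prod_eq_pow (fun x => exp (-b * x ^ 2)),
    integral_exp_neg_mul_sq_gaussianReal b]

lemma gaussianReal_prod_pi_mul_sum_sq_lt_sq_le (m : ℕ) {κ : ℝ} (hκ : 0 ≤ κ) :
    ((gaussianReal 0 1).prod (Measure.pi fun _ : Fin m => gaussianReal 0 1))
      {p | κ * ∑ j, p.2 j ^ 2 < p.1 ^ 2} ≤ ENNReal.ofReal (2 * (√(1 + κ))⁻¹ ^ m) := by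
  have hmeas : MeasurableSet {p : ℝ × (Fin m → ℝ) | κ * ∑ j, p.2 j ^ 2 < p.1 ^ 2} :=
    measurableSet_lt (by fun_prop) (by fun_prop)
  rw [Measure.prod_apply_symm hmeas]
  calc ∫⁻ z, gaussianReal 0 1 {a | κ * ∑ j, z j ^ 2 < a ^ 2} ∂Measure.pi _
      ≤ ∫⁻ z, ENNReal.ofReal 2 * ENNReal.ofReal (exp (-(κ / 2) * ∑ j, z j ^ 2)) ∂Measure.pi _ := by
        refine lintegral_mono fun z => ?_
        rw [← ENNReal.ofReal_mul zero_le_two]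
        convert gaussianReal_lt_sq_le (s := κ * ∑ j, z j ^ 2) (by positivity) using 4
        ring
    _ = ENNReal.ofReal (2 * (√(1 + κ))⁻¹ ^ m) := by
        rw [lintegral_const_mul _ (by fun_prop),
          lintegral_exp_neg_mul_sum_sq_pi_gaussianReal (by positivity),
          ← ENNReal.ofReal_mul zero_le_two, Fintype.card_fin, mul_div_cancel₀ _ two_ne_zero]

lemma stdGaussian_sq_mul_norm_sq_lt_sq_le (m : ℕ) (t : ℝ) :
    stdGaussian (EuclideanSpace ℝ (Fin (m + 1))) {g | t ^ 2 * ‖g‖ ^ 2 < g 0 ^ 2}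
      ≤ ENNReal.ofReal (2 * exp (-m * t ^ 2 / 2)) := by
  set T : Set (ℝ × (Fin m → ℝ)) := {p | t ^ 2 * (p.1 ^ 2 + ∑ j, p.2 j ^ 2) < p.1 ^ 2}
  have hT : MeasurableSet T := measurableSet_lt (by fun_prop) (by fun_prop)
  have hpre : WithLp.toLp 2 ⁻¹' {g : EuclideanSpace ℝ (Fin (m + 1)) | t ^ 2 * ‖g‖ ^ 2 < g 0 ^ 2}
      = MeasurableEquiv.piFinSuccAbove (fun _ => ℝ) 0 ⁻¹' T := by
    ext y
    simp [T, EuclideanSpace.real_norm_sq_eq, Fin.sum_univ_succAbove _ 0, Fin.tail]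
  rw [← map_pi_eq_stdGaussian, Measure.map_apply (by fun_prop)
      (measurableSet_lt (by fun_prop) (by fun_prop)), hpre,
    (measurePreserving_piFinSuccAbove (fun _ => gaussianReal 0 1) 0).measure_preimage
      hT.nullMeasurableSet]
  rcases lt_or_ge (t ^ 2) 1 with ht | ht
  · set κ := t ^ 2 / (1 - t ^ 2)
    have h1t : 0 < 1 - t ^ 2 := by linarith
    have hTκ : T = {p | κ * ∑ j, p.2 j ^ 2 < p.1 ^ 2} := by
      ext p
      simp only [T, κ, mem_ofPred_eq, div_mul_eq_mul_div, div_lt_iff₀ h1t]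
      constructor <;> intro h <;> linarith
    have hfactor : (√(1 + κ))⁻¹ ≤ exp (-t ^ 2 / 2) := by
      rw [show 1 + κ = (1 - t ^ 2)⁻¹ by simp only [κ]; field_simp; ring, Real.sqrt_inv,
        inv_inv, exp_half]
      exact Real.sqrt_le_sqrt (by linarith [add_one_le_exp (-t ^ 2)])
    calc _ ≤ ENNReal.ofReal (2 * (√(1 + κ))⁻¹ ^ m) := by
          rw [hTκ]; exact gaussianReal_prod_pi_mul_sum_sq_lt_sq_le m (by positivity)
      _ ≤ ENNReal.ofReal (2 * exp (-m * t ^ 2 / 2)) := by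
          gcongr
          rw [show -(m : ℝ) * t ^ 2 / 2 = m * (-t ^ 2 / 2) by ring, exp_nat_mul]
          gcongr
  · have hT0 : T = ∅ := by
      refine eq_empty_of_forall_notMem fun p hp => ?_
      have hS : 0 ≤ ∑ j, p.2 j ^ 2 := by positivity
      have : p.1 ^ 2 + ∑ j, p.2 j ^ 2 ≤ t ^ 2 * (p.1 ^ 2 + ∑ j, p.2 j ^ 2) :=
        le_mul_of_one_le_left (by positivity) ht
      exact absurd hp (by simp only [T, mem_ofPred_eq, not_lt]; linarith)
    simp [hT0]

lemma lt_abs_div_iff_sq_mul_sq_lt_sq {t a n : ℝ} (ht : 0 ≤ t) (han : |a| ≤ n) :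
    t < |a| / n ↔ t ^ 2 * n ^ 2 < a ^ 2 := by
  rcases (abs_nonneg a).trans han |>.eq_or_lt with hn | hn
  · have ha : a = 0 := abs_eq_zero.1 (le_antisymm (hn ▸ han) (abs_nonneg a))
    simp [← hn, ha, not_lt.2 ht]
  · rw [lt_div_iff₀ hn, ← mul_pow, ← sq_abs a]
    exact (pow_lt_pow_iff_left₀ (by positivity) (abs_nonneg a) two_ne_zero).symm

/-- Concentration of measure on the sphere: let `N ≥ 2` and let `μ` be the uniform
probability measure on the unit sphere `S^{N−1} ⊂ ℝ^N` (i.e. the unique Borel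
probability measure giving full mass to the sphere and invariant under every
linear isometry of `ℝ^N`). Then for every `t ≥ 0`,
`μ {x : |x₁| > t} ≤ 2 exp(−(N−1) t²/2)`. -/
theorem sphere_coordinate_concentration (N : ℕ) (hN : 2 ≤ N)
    (μ : Measure (EuclideanSpace ℝ (Fin N))) [IsProbabilityMeasure μ]
    (hsphere : μ (Metric.sphere (0 : EuclideanSpace ℝ (Fin N)) 1) = 1)
    (hinv : ∀ A : EuclideanSpace ℝ (Fin N) ≃ₗᵢ[ℝ] EuclideanSpace ℝ (Fin N),
      Measure.map A μ = μ)
    (t : ℝ) (ht : 0 ≤ t) :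
    μ {x : EuclideanSpace ℝ (Fin N) | t < |x ⟨0, by omega⟩|}
      ≤ ENNReal.ofReal (2 * Real.exp (-((N : ℝ) - 1) * t ^ 2 / 2)) := by
  obtain ⟨m, rfl⟩ : ∃ m, N = m + 1 := ⟨N - 1, by omega⟩
  set e : EuclideanSpace ℝ (Fin (m + 1)) := EuclideanSpace.single 0 1
  have hμ1 : ∀ᵐ x ∂μ, ‖x‖ = 1 := by
    filter_upwards [mem_ae_iff.2 ((prob_compl_eq_zero_iff Metric.isClosed_sphere.measurableSet).2
      hsphere)] with x hx using mem_sphere_zero_iff_norm.1 hx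
  have hlaw := map_inner_eq_map_inner_div_norm hinv hμ1 (fun A => stdGaussian_map A)
    (Measure.ae_ne _ 0) (e := e) (by simp [e])
  have hmeas : MeasurableSet {a : ℝ | t < |a|} := measurableSet_lt measurable_const (by fun_prop)
  calc μ {x | t < |x 0|} = μ.map (fun x => ⟪e, x⟫) {a | t < |a|} := by
        rw [Measure.map_apply (by fun_prop) hmeas]; simp [e, EuclideanSpace.inner_single_left]
    _ = stdGaussian (EuclideanSpace ℝ (Fin (m + 1))) {g | t ^ 2 * ‖g‖ ^ 2 < g 0 ^ 2} := by
        rw [hlaw, Measure.map_apply (by fun_prop) hmeas]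
        congr 1; ext g
        simpa [e, EuclideanSpace.inner_single_left, abs_div] using
          lt_abs_div_iff_sq_mul_sq_lt_sq ht (by simpa using PiLp.norm_apply_le g 0)
    _ ≤ ENNReal.ofReal (2 * exp (-m * t ^ 2 / 2)) := stdGaussian_sq_mul_norm_sq_lt_sq_le m t
    _ = _ := by push_cast; ring_nf
end
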